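/- For every e ∈ 𝕍 (including the negative unit vectors) one has u_z(e) = √C_z · e^{⟨θ_z, e⟩} · m(e), where θ_z ∈ ℝ^d is defined only through its values on the positive basis vectors. -/

import Mathlib

open Finset

/-- `unitVecs d` is the set `𝕍 = {e ∈ ℤ^d : |e|₁ = 1}` of signed unit coordinate vectors. -/
noncomputable def unitVecs (d : ℕ) : Finset (Fin d → ℤ) :=
  (Finset.Icc (fun _ => (-1 : ℤ)) (fun _ => 1)).filter (fun e => ∑ i, |e i| = 1)

/-- The inner product `⟨z, e⟩` of `z ∈ ℝ^d` with `e ∈ ℤ^d`. -/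
noncomputable def innZ {d : ℕ} (z : Fin d → ℝ) (e : Fin d → ℤ) : ℝ :=
  ∑ i, z i * (e i : ℝ)

/-!
`u_z(e)` and `-u_z(-e)` are the two roots of `x² - ⟨z, e⟩ x - C_z m(e) m(-e)`, so by Vieta
`u_z(e) u_z(-e) = C_z m(e) m(-e)`. On a positive basis vector `e_j` the identity is the
definition of `θ_z`; on `-e_j` it follows by dividing this product relation by
`u_z(e_j) = √C_z e^{θ_j} m(e_j)`.
-/

open Real

lemma mem_unitVecs {d : ℕ} {e : Fin d → ℤ} :
    e ∈ unitVecs d ↔ (∀ i, |e i| ≤ 1) ∧ ∑ i, |e i| = 1 := by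
  simp only [unitVecs, mem_filter, mem_Icc, Pi.le_def, ← forall_and, abs_le]

lemma neg_mem_unitVecs {d : ℕ} {e : Fin d → ℤ} (he : e ∈ unitVecs d) : -e ∈ unitVecs d := by
  simpa [mem_unitVecs] using he

lemma single_mem_unitVecs {d : ℕ} (j : Fin d) {s : ℤ} (hs : |s| = 1) :
    Pi.single j s ∈ unitVecs d := by
  refine mem_unitVecs.2 ⟨fun i => ?_, ?_⟩
  · rcases eq_or_ne i j with rfl | hij <;> simp [*]
  · simp [Pi.single_apply, apply_ite, hs]

lemma exists_eq_single_of_mem_unitVecs {d : ℕ} {e : Fin d → ℤ} (he : e ∈ unitVecs d) :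
    ∃ j, e = Pi.single j 1 ∨ e = Pi.single j (-1) := by
  obtain ⟨hle, hsum⟩ := mem_unitVecs.1 he
  obtain ⟨j, hj⟩ : ∃ j, e j ≠ 0 := by
    by_contra! h
    simp [h] at hsum
  have hrest : ∀ i ≠ j, e i = 0 := by
    intro i hij
    by_contra hi
    have := Finset.sum_le_sum_of_subset_of_nonneg (subset_univ {i, j}) fun k _ _ => abs_nonneg (e k)
    rw [sum_pair hij] at this
    have := Int.one_le_abs hi
    have := Int.one_le_abs hj
    omega
  have he_single : e = Pi.single j (e j) := by
    ext i
    rcases eq_or_ne i j with rfl | hij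
    · simp
    · simp [hij, hrest i hij]
  refine ⟨j, ?_⟩
  rw [he_single]
  rcases (abs_eq zero_le_one).1 (le_antisymm (hle j) (Int.one_le_abs hj)) with h | h <;> simp [h]

lemma sum_mul_intCast_single {d : ℕ} (θ : Fin d → ℝ) (j : Fin d) (s : ℤ) :
    ∑ i, θ i * ((Pi.single j s : Fin d → ℤ) i : ℝ) = θ j * s := by
  simp [Pi.single_apply]

lemma innZ_neg {d : ℕ} (z : Fin d → ℝ) (e : Fin d → ℤ) : innZ z (-e) = -innZ z e := by
  simp [innZ, ← sum_neg_distrib]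

lemma add_sqrt_pos (a : ℝ) {b : ℝ} (hb : 0 < b) : 0 < a + √(a ^ 2 + b) := by
  have : |a| < √(a ^ 2 + b) := by
    rw [← Real.sqrt_sq_eq_abs]
    exact Real.sqrt_lt_sqrt (sq_nonneg a) (by linarith)
  linarith [neg_abs_le a]

lemma add_sqrt_mul_neg_add_sqrt (a : ℝ) {b : ℝ} (hb : 0 ≤ b) :
    (a + √(a ^ 2 + b)) * (-a + √(a ^ 2 + b)) = b := by
  have := Real.sq_sqrt (by positivity : 0 ≤ a ^ 2 + b)
  linear_combination this

theorem stmt7_general (d : ℕ) (z : Fin d → ℝ)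
    (m : (Fin d → ℤ) → ℝ) (hm : ∀ e ∈ unitVecs d, 0 < m e ∧ m e ≤ 1)
    (C : ℝ) (hC : 0 < C)
    (u : (Fin d → ℤ) → ℝ)
    (hu : ∀ e ∈ unitVecs d,
      2 * u e = innZ z e + Real.sqrt ((innZ z e)^2 + 4 * C * m e * m (-e)))
    (θ : Fin d → ℝ)
    (hθ : ∀ j : Fin d, θ j = Real.log
      (u (fun i => if i = j then 1 else 0) /
        (Real.sqrt C * m (fun i => if i = j then 1 else 0)))) :
    ∀ e ∈ unitVecs d,
      u e = Real.sqrt C * Real.exp (∑ i, θ i * (e i : ℝ)) * m e := by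
  simp only [← Pi.single_apply] at hθ
  have hCm_pos : ∀ e ∈ unitVecs d, 0 < 4 * C * m e * m (-e) := fun e he => by
    have := (hm e he).1
    have := (hm _ (neg_mem_unitVecs he)).1
    positivity
  have hu_pos : ∀ e ∈ unitVecs d, 0 < u e := fun e he => by
    linarith [hu e he, add_sqrt_pos (innZ z e) (hCm_pos e he)]
  have hu_mul : ∀ e ∈ unitVecs d, u e * u (-e) = C * m e * m (-e) := fun e he => by
    have h := hu (-e) (neg_mem_unitVecs he)
    rw [innZ_neg, neg_sq, neg_neg, mul_right_comm _ (m (-e))] at h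
    have := add_sqrt_mul_neg_add_sqrt (innZ z e) (hCm_pos e he).le
    rw [← hu e he, ← h] at this
    linarith
  have hu_single : ∀ j, u (Pi.single j 1) = √C * exp (θ j) * m (Pi.single j 1) := fun j => by
    have hb := single_mem_unitVecs j (abs_one (α := ℤ))
    have := hu_pos _ hb
    have := (hm _ hb).1
    rw [hθ, exp_log (by positivity)]
    field_simp
  intro e he
  obtain ⟨j, rfl | rfl⟩ := exists_eq_single_of_mem_unitVecs he
  · rw [sum_mul_intCast_single, Int.cast_one, mul_one, hu_single]
  · have hb := single_mem_unitVecs j (abs_one (α := ℤ))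
    have := (hm _ hb).1
    rw [sum_mul_intCast_single, Int.cast_neg, Int.cast_one, mul_neg_one, exp_neg, Pi.single_neg]
    apply mul_left_cancel₀ (hu_pos _ hb).ne'
    rw [hu_mul _ hb, hu_single]
    field_simp
    rw [sq_sqrt hC.le, mul_comm]

/-- for every `e ∈ 𝕍` (including negative unit vectors),
`u_z(e) = √C_z · e^{⟨θ_z,e⟩} · m(e)`, with `θ_z` defined through the positive
basis vectors only. -/
theorem stmt7 (d : ℕ) (hd : 1 ≤ d) (z : Fin d → ℝ) (hz : ∑ i, |z i| < 1)
    (m : (Fin d → ℤ) → ℝ) (hm : ∀ e ∈ unitVecs d, 0 < m e ∧ m e ≤ 1)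
    (hm1 : ∑ e ∈ unitVecs d, m e = 1)
    (C : ℝ) (hC : 0 < C)
    (hfC : (1/2) * ∑ e ∈ unitVecs d,
      Real.sqrt ((innZ z e)^2 + 4 * C * m e * m (-e)) = 1)
    (u : (Fin d → ℤ) → ℝ)
    (hu : ∀ e ∈ unitVecs d,
      2 * u e = innZ z e + Real.sqrt ((innZ z e)^2 + 4 * C * m e * m (-e)))
    (θ : Fin d → ℝ)
    (hθ : ∀ j : Fin d, θ j = Real.log
      (u (fun i => if i = j then 1 else 0) /
        (Real.sqrt C * m (fun i => if i = j then 1 else 0)))) :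
    ∀ e ∈ unitVecs d,
      u e = Real.sqrt C * Real.exp (∑ i, θ i * (e i : ℝ)) * m e :=
  stmt7_general d z m hm C hC u hu θ hθ
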